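/- arXiv:2112.09082 — 12 statements merged into one kernel-verified Lean document; each statement's English description precedes it below -/
import Mathlib

section
/- The theta functions of the quartic del Pezzo surface satisfy the quadratic relation ϑ_1 · ϑ_3 = C_1 + t^{H-E_1-E_2} ϑ_2 + t^{H-E_1-E_5} ϑ_4 in the Laurent polynomial ring A. -/
/- STATEMENT 0: The theta functions of the quartic del Pezzo surface satisfy the
quadratic relation ϑ₁ · ϑ₃ = C₁ + t^{H-E₁-E₂} ϑ₂ + t^{H-E₁-E₅} ϑ₄ in the Laurent
polynomial ring A = R[x^{±1}, y^{±1}], where R = ℂ[t_H^{±1}, t₁^{±1}, …, t₅^{±1}]. -/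

noncomputable section

/-- `R = ℂ[t_H^{±1}, t₁^{±1}, t₂^{±1}, t₃^{±1}, t₄^{±1}, t₅^{±1}]`, the Laurent
polynomial ring in six variables over `ℂ`, realized as the monoid algebra of `ℤ⁶`. -/
abbrev Rdp : Type := AddMonoidAlgebra ℂ (Fin 6 → ℤ)

/-- `A = R[x^{±1}, y^{±1}]`, the Laurent polynomial ring in `x, y` over `R`. -/
abbrev Adp : Type := AddMonoidAlgebra Rdp (ℤ × ℤ)

/-- The monomial `t^{aH + b₁E₁ + ⋯ + b₅E₅} = t_H^a t₁^{b₁} ⋯ t₅^{b₅} ∈ R`. -/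
def tdp (a b1 b2 b3 b4 b5 : ℤ) : Rdp := AddMonoidAlgebra.single ![a, b1, b2, b3, b4, b5] 1

/-- The monomial `x^p y^q ∈ A`. -/
def zdp (p q : ℤ) : Adp := AddMonoidAlgebra.single (p, q) 1

/-- The inclusion `R → A` as constants. -/
def cdp (r : Rdp) : Adp := AddMonoidAlgebra.single 0 r

/-- `ϑ₁ = x⁻¹y⁻¹ + t^{E₁-E₅} x⁻¹y⁻² + t^{H-E₄-E₅} y⁻¹`. -/
def θ₁ : Adp :=
  zdp (-1) (-1) + cdp (tdp 0 1 0 0 0 (-1)) * zdp (-1) (-2)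
    + cdp (tdp 1 0 0 0 (-1) (-1)) * zdp 0 (-1)

/-- `ϑ₂ = x⁻¹ + t^{H-E₁-E₃} y + t^{E₁-E₅} x⁻¹y⁻¹`. -/
def θ₂ : Adp :=
  zdp (-1) 0 + cdp (tdp 1 (-1) 0 (-1) 0 0) * zdp 0 1
    + cdp (tdp 0 1 0 0 0 (-1)) * zdp (-1) (-1)

/-- `ϑ₃ = t^{H-E₁} xy + t^{2H-2E₁-E₂-E₃} xy² + t^{H-E₁-E₂} y`. -/
def θ₃ : Adp :=
  cdp (tdp 1 (-1) 0 0 0 0) * zdp 1 1 + cdp (tdp 2 (-2) (-1) (-1) 0 0) * zdp 1 2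
    + cdp (tdp 1 (-1) (-1) 0 0 0) * zdp 0 1

/-- `ϑ₄ = t^{E₁} y⁻¹ + t^{H-E₄} x + t^{2H-E₁-E₂-E₃-E₄} xy`. -/
def θ₄ : Adp :=
  cdp (tdp 0 1 0 0 0 0) * zdp 0 (-1) + cdp (tdp 1 0 0 0 (-1) 0) * zdp 1 0
    + cdp (tdp 2 (-1) (-1) (-1) (-1) 0) * zdp 1 1

/-- `C₁ = t^{H-E₁} + t^{2H-E₁-E₂-E₃-E₅} + t^{2H-E₁-E₂-E₄-E₅} ∈ R`. -/
def Cdp₁ : Rdp :=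
  tdp 1 (-1) 0 0 0 0 + tdp 2 (-1) (-1) (-1) 0 (-1) + tdp 2 (-1) (-1) 0 (-1) (-1)

/-- `C₂ = t^{H-E₄} + t^{H-E₃} + t^{2H-E₂-E₃-E₄-E₅} ∈ R`. -/
def Cdp₂ : Rdp :=
  tdp 1 0 0 0 (-1) 0 + tdp 1 0 0 (-1) 0 0 + tdp 2 0 (-1) (-1) (-1) (-1)

/-- `ϑ₁ ϑ₃ = C₁ + t^{H-E₁-E₂} ϑ₂ + t^{H-E₁-E₅} ϑ₄` in `A`. -/
theorem theta_one_mul_theta_three :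
    θ₁ * θ₃ = cdp Cdp₁ + cdp (tdp 1 (-1) (-1) 0 0 0) * θ₂
      + cdp (tdp 1 (-1) 0 0 0 (-1)) * θ₄ := by
  simp only [θ₁, θ₂, θ₃, θ₄, Cdp₁, tdp, cdp, zdp, add_mul, mul_add,
    AddMonoidAlgebra.single_mul_single, AddMonoidAlgebra.single_add, one_mul, mul_one,
    zero_add, add_zero, Prod.mk_add_mk, Matrix.cons_add_cons, Matrix.empty_add_empty]
  norm_num
  rw [show (0 : ℤ × ℤ) = (0, 0) from rfl]
  abel

end
end

section
/- The theta functions of the quartic del Pezzo surface satisfy the quadratic relation ϑ_2 · ϑ_4 = C_2 + t^{E_1} ϑ_1 + t^{H-E_3-E_4} ϑ_3 in the Laurent polynomial ring A. -/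
/- STATEMENT 1: The theta functions of the quartic del Pezzo surface satisfy the
quadratic relation ϑ₂ · ϑ₄ = C₂ + t^{E₁} ϑ₁ + t^{H-E₃-E₄} ϑ₃ in the Laurent
polynomial ring A = R[x^{±1}, y^{±1}], where R = ℂ[t_H^{±1}, t₁^{±1}, …, t₅^{±1}]. -/

noncomputable section

lemma vecadd (a b c d e f a' b' c' d' e' f' : ℤ) :
    (![a,b,c,d,e,f] + ![a',b',c',d',e',f'] : Fin 6 → ℤ) = ![a+a',b+b',c+c',d+d',e+e',f+f'] := by
  ext i; fin_cases i <;> rfl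

lemma key (a b c d e f p q a' b' c' d' e' f' p' q' : ℤ) :
    (cdp (tdp a b c d e f) * zdp p q) * (cdp (tdp a' b' c' d' e' f') * zdp p' q')
    = cdp (tdp (a+a') (b+b') (c+c') (d+d') (e+e') (f+f')) * zdp (p+p') (q+q') := by
  simp only [cdp, zdp, tdp, AddMonoidAlgebra.single_mul_single, one_mul, mul_one, zero_add,
    Prod.mk_add_mk, add_zero, vecadd]

lemma key2 (a b c d e f p q a' b' c' d' e' f' : ℤ) :
    cdp (tdp a b c d e f) * (cdp (tdp a' b' c' d' e' f') * zdp p q)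
    = cdp (tdp (a+a') (b+b') (c+c') (d+d') (e+e') (f+f')) * zdp p q := by
  simp only [cdp, zdp, tdp, AddMonoidAlgebra.single_mul_single, one_mul, mul_one, zero_add,
    Prod.mk_add_mk, add_zero, vecadd, ← mul_assoc]

lemma key3 (a b c d e f p q p' q' : ℤ) :
    zdp p q * (cdp (tdp a b c d e f) * zdp p' q')
    = cdp (tdp a b c d e f) * zdp (p+p') (q+q') := by
  simp only [cdp, zdp, tdp, AddMonoidAlgebra.single_mul_single, one_mul, mul_one, zero_add,
    Prod.mk_add_mk, add_zero, add_comm p' p, add_comm q' q]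

lemma cdp_add (r s : Rdp) : cdp (r + s) = cdp r + cdp s := AddMonoidAlgebra.single_add _ _ _

lemma z00 (r : Rdp) : cdp r * zdp 0 0 = cdp r := by
  simp [cdp, zdp, AddMonoidAlgebra.single_mul_single]
  rfl

/-- `ϑ₂ ϑ₄ = C₂ + t^{E₁} ϑ₁ + t^{H-E₃-E₄} ϑ₃` in `A`. -/
theorem theta_two_mul_theta_four :
    θ₂ * θ₄ = cdp Cdp₂ + cdp (tdp 0 1 0 0 0 0) * θ₁
      + cdp (tdp 1 0 0 (-1) (-1) 0) * θ₃ := by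
  rw [θ₂, θ₃, θ₄, θ₁, Cdp₂]
  simp only [cdp_add, add_mul, mul_add, key, key2, key3]
  norm_num
  simp only [z00]
  abel

end
end

section
/- The quantum theta functions satisfy the quantized quadratic relation ϑ̂_1 · ϑ̂_3 = C_1·1 + s^{-1} t^{H-E_1-E_2} ϑ̂_2 + s t^{H-E_1-E_5} ϑ̂_4 in A (here s = q^{1/2}). -/
noncomputable section

/-- `R = ℂ[s^{±1}, t_H^{±1}, t₁^{±1}, …, t₅^{±1}]`, the Laurent polynomial ring in
seven variables over `ℂ` (index 0 is `s = q^{1/2}`, index 1 is `t_H`, indices 2–6 are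
`t₁, …, t₅`), realized as the monoid algebra of `ℤ⁷`. -/
abbrev Rq : Type := AddMonoidAlgebra ℂ (Fin 7 → ℤ)

/-- The power `s^k ∈ R` of the quantum parameter `s = q^{1/2}`. -/
def sQ (k : ℤ) : Rq := AddMonoidAlgebra.single ![k, 0, 0, 0, 0, 0, 0] 1

/-- The monomial `t^{aH + b₁E₁ + ⋯ + b₅E₅} = t_H^a t₁^{b₁} ⋯ t₅^{b₅} ∈ R`. -/
def tq (a b1 b2 b3 b4 b5 : ℤ) : Rq := AddMonoidAlgebra.single ![0, a, b1, b2, b3, b4, b5] 1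

/-- `det((v₁,v₂),(w₁,w₂)) = v₁w₂ - v₂w₁`. -/
def detq (v w : ℤ × ℤ) : ℤ := v.1 * w.2 - v.2 * w.1

variable {A : Type} [Ring A] [Algebra Rq A]

/-- The quantum torus relations: `ẑ^{(0,0)} = 1` and
`ẑ^v ẑ^w = s^{det(v,w)} ẑ^{v+w}` for all `v, w ∈ ℤ²`. -/
def IsQuantumTorus (zhat : ℤ × ℤ → A) : Prop :=
  zhat 0 = 1 ∧ ∀ v w : ℤ × ℤ, zhat v * zhat w = sQ (detq v w) • zhat (v + w)

/-- `ϑ̂₁ = ẑ^{(-1,-1)} + t^{E₁-E₅} ẑ^{(-1,-2)} + t^{H-E₄-E₅} ẑ^{(0,-1)}`. -/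
def θq₁ (zhat : ℤ × ℤ → A) : A :=
  zhat (-1, -1) + tq 0 1 0 0 0 (-1) • zhat (-1, -2) + tq 1 0 0 0 (-1) (-1) • zhat (0, -1)

/-- `ϑ̂₂ = ẑ^{(-1,0)} + t^{H-E₁-E₃} ẑ^{(0,1)} + t^{E₁-E₅} ẑ^{(-1,-1)}`. -/
def θq₂ (zhat : ℤ × ℤ → A) : A :=
  zhat (-1, 0) + tq 1 (-1) 0 (-1) 0 0 • zhat (0, 1) + tq 0 1 0 0 0 (-1) • zhat (-1, -1)

/-- `ϑ̂₃ = t^{H-E₁} ẑ^{(1,1)} + t^{2H-2E₁-E₂-E₃} ẑ^{(1,2)} + t^{H-E₁-E₂} ẑ^{(0,1)}`. -/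
def θq₃ (zhat : ℤ × ℤ → A) : A :=
  tq 1 (-1) 0 0 0 0 • zhat (1, 1) + tq 2 (-2) (-1) (-1) 0 0 • zhat (1, 2)
    + tq 1 (-1) (-1) 0 0 0 • zhat (0, 1)

/-- `ϑ̂₄ = t^{E₁} ẑ^{(0,-1)} + t^{H-E₄} ẑ^{(1,0)} + t^{2H-E₁-E₂-E₃-E₄} ẑ^{(1,1)}`. -/
def θq₄ (zhat : ℤ × ℤ → A) : A :=
  tq 0 1 0 0 0 0 • zhat (0, -1) + tq 1 0 0 0 (-1) 0 • zhat (1, 0)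
    + tq 2 (-1) (-1) (-1) (-1) 0 • zhat (1, 1)

/-- `C₁ = t^{H-E₁} + t^{2H-E₁-E₂-E₃-E₅} + t^{2H-E₁-E₂-E₄-E₅} ∈ R`. -/
def Cq₁ : Rq :=
  tq 1 (-1) 0 0 0 0 + tq 2 (-1) (-1) (-1) 0 (-1) + tq 2 (-1) (-1) 0 (-1) (-1)

/-- `C₂ = t^{H-E₄} + t^{H-E₃} + t^{2H-E₂-E₃-E₄-E₅} ∈ R`. -/
def Cq₂ : Rq :=
  tq 1 0 0 0 (-1) 0 + tq 1 0 0 (-1) 0 0 + tq 2 0 (-1) (-1) (-1) (-1)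

def mq (k a b1 b2 b3 b4 b5 : ℤ) : Rq := AddMonoidAlgebra.single ![k, a, b1, b2, b3, b4, b5] 1

lemma sQ_eq (k : ℤ) : sQ k = mq k 0 0 0 0 0 0 := rfl
lemma tq_eq (a b1 b2 b3 b4 b5 : ℤ) : tq a b1 b2 b3 b4 b5 = mq 0 a b1 b2 b3 b4 b5 := rfl

lemma mq_mul (k a b1 b2 b3 b4 b5 k' a' b1' b2' b3' b4' b5' : ℤ) :
    mq k a b1 b2 b3 b4 b5 * mq k' a' b1' b2' b3' b4' b5'
      = mq (k+k') (a+a') (b1+b1') (b2+b2') (b3+b3') (b4+b4') (b5+b5') := by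
  unfold mq
  rw [AddMonoidAlgebra.single_mul_single, one_mul]
  congr 1
  funext i; fin_cases i <;> rfl

lemma mq_zero : mq 0 0 0 0 0 0 0 = 1 := by
  unfold mq
  rw [AddMonoidAlgebra.one_def]
  congr 1
  funext i; fin_cases i <;> rfl

theorem quantum_theta_one_mul_theta_three {A : Type} [Ring A] [Algebra Rq A] (zhat : ℤ × ℤ → A)
    (hz : IsQuantumTorus zhat) :
    θq₁ zhat * θq₃ zhat = algebraMap Rq A Cq₁
      + (sQ (-1) * tq 1 (-1) (-1) 0 0 0) • θq₂ zhat
      + (sQ 1 * tq 1 (-1) 0 0 0 (-1)) • θq₄ zhat := by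
  obtain ⟨h0, hm⟩ := hz
  simp only [θq₁, θq₂, θq₃, θq₄, Cq₁, Algebra.algebraMap_eq_smul_one, sQ_eq, tq_eq, add_mul,
    mul_add, smul_mul_assoc, mul_smul_comm, hm, detq, Prod.mk_add_mk, smul_smul, smul_add,
    mq_mul, add_smul, sQ_eq, tq_eq]
  norm_num [mq_zero, h0, Prod.mk_zero_zero]
  abel

end
end

section
/- The quantum theta functions satisfy the quantized quadratic relation ϑ̂_2 · ϑ̂_4 = C_2·1 + s t^{E_1} ϑ̂_1 + s^{-1} t^{H-E_3-E_4} ϑ̂_3 in A (here s = q^{1/2}). -/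
noncomputable section

variable {A : Type} [Ring A] [Algebra Rq A]

theorem quantum_theta_two_mul_theta_four {A : Type} [Ring A] [Algebra Rq A] (zhat : ℤ × ℤ → A)
    (hz : IsQuantumTorus zhat) :
    θq₂ zhat * θq₄ zhat = algebraMap Rq A Cq₂
      + (sQ 1 * tq 0 1 0 0 0 0) • θq₁ zhat
      + (sQ (-1) * tq 1 0 0 (-1) (-1) 0) • θq₃ zhat := by
  obtain ⟨h0, hm⟩ := hz
  have hsm : ∀ (r r' : Rq) (a b : A), (r • a) * (r' • b) = (r * r') • (a * b) := by
    intro r r' a b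
    rw [smul_mul_assoc, mul_smul_comm, smul_smul, mul_comm r r']
  simp only [θq₁, θq₂, θq₃, θq₄, Cq₂, add_mul, mul_add, hsm, smul_mul_assoc,
    mul_smul_comm, hm, smul_smul, detq, sQ, tq, AddMonoidAlgebra.single_mul_single,
    Prod.mk_add_mk, one_mul, mul_one, Algebra.algebraMap_eq_smul_one, map_add]
  norm_num
  rw [show ((0 : ℤ × ℤ)) = ((0 : ℤ), (0 : ℤ)) from rfl] at h0
  simp only [h0]
  have hv : ∀ (a b c d e f g a' b' c' d' e' f' g' : ℤ),
      (![a,b,c,d,e,f,g] + ![a',b',c',d',e',f',g'] : Fin 7 → ℤ)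
        = ![a+a',b+b',c+c',d+d',e+e',f+f',g+g'] := by
    intro a b c d e f g a' b' c' d' e' f' g'
    funext i
    fin_cases i <;> rfl
  simp only [smul_smul, AddMonoidAlgebra.single_mul_single, hv, one_mul]
  norm_num
  abel

end
end

section
/- The quantum theta functions satisfy the commutation relation s ϑ̂_1 ϑ̂_3 − s^{-1} ϑ̂_3 ϑ̂_1 = (s − s^{-1}) C_1·1 + (s^2 − s^{-2}) t^{H-E_1-E_5} ϑ̂_4 in A (here s = q^{1/2}). -/
noncomputable section

variable {A : Type} [Ring A] [Algebra Rq A]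

/-! Both theta functions are sums of three monomials, so the `s`-skew commutator
`s xy - s⁻¹ yx` splits into nine commutators of monomials, and
`s ẑ^v ẑ^w - s⁻¹ ẑ^w ẑ^v = (s^{1+det(v,w)} - s^{-1-det(v,w)}) ẑ^{v+w}`.
Of the nine pairs, three have `det = -1` and cancel, three have `det = 0` and give the
constant term `(s - s⁻¹) C₁`, and three have `det = 1` and give `(s² - s⁻²) t^{H-E₁-E₅} ϑ̂₄`. -/

section SkewCommutator

variable {R A : Type*} [CommRing R] [Ring A] [Algebra R A]

def skewCommutator (a b : R) : A →ₗ[R] A →ₗ[R] A :=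
  a • LinearMap.mul R A - b • (LinearMap.mul R A).flip

theorem skewCommutator_apply (a b : R) (x y : A) :
    skewCommutator a b x y = a • (x * y) - b • (y * x) :=
  rfl

end SkewCommutator

theorem sQ_mul_sQ (k l : ℤ) : sQ k * sQ l = sQ (k + l) := by
  simp only [sQ, AddMonoidAlgebra.single_mul_single, mul_one, Matrix.cons_add_cons,
    Matrix.empty_add_empty, add_zero]

theorem tq_mul_tq (a b1 b2 b3 b4 b5 a' b1' b2' b3' b4' b5' : ℤ) :
    tq a b1 b2 b3 b4 b5 * tq a' b1' b2' b3' b4' b5'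
      = tq (a + a') (b1 + b1') (b2 + b2') (b3 + b3') (b4 + b4') (b5 + b5') := by
  simp only [tq, AddMonoidAlgebra.single_mul_single, mul_one, Matrix.cons_add_cons,
    Matrix.empty_add_empty, add_zero]

theorem detq_swap (v w : ℤ × ℤ) : detq w v = -detq v w := by
  simp only [detq]
  ring

theorem IsQuantumTorus.skewCommutator_eq {zhat : ℤ × ℤ → A} (hz : IsQuantumTorus zhat)
    (v w : ℤ × ℤ) :
    skewCommutator (sQ 1) (sQ (-1)) (zhat v) (zhat w)
      = (sQ (1 + detq v w) - sQ (-1 - detq v w)) • zhat (v + w) := by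
  rw [skewCommutator_apply, hz.2, hz.2, smul_smul, smul_smul, sQ_mul_sQ, sQ_mul_sQ,
    detq_swap v w, add_comm w v, sub_smul, sub_eq_add_neg (-1)]

theorem quantum_commutation_one_three {A : Type} [Ring A] [Algebra Rq A] (zhat : ℤ × ℤ → A)
    (hz : IsQuantumTorus zhat) :
    sQ 1 • (θq₁ zhat * θq₃ zhat) - sQ (-1) • (θq₃ zhat * θq₁ zhat)
      = algebraMap Rq A ((sQ 1 - sQ (-1)) * Cq₁)
        + ((sQ 2 - sQ (-2)) * tq 1 (-1) 0 0 0 (-1)) • θq₄ zhat := by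
  rw [← skewCommutator_apply, Algebra.algebraMap_eq_smul_one, ← hz.1]
  simp only [θq₁, θq₃, θq₄, Cq₁, map_add, LinearMap.add_apply, map_smul, LinearMap.smul_apply,
    hz.skewCommutator_eq]
  norm_num [detq]
  match_scalars <;>
    simp only [mul_one, mul_add, mul_assoc, mul_comm _ (sQ _ - sQ _),
      mul_left_comm _ (sQ _ - sQ _), tq_mul_tq] <;>
    norm_num

end
end

section
/- The quantum theta functions satisfy the commutation relation s ϑ̂_1 ϑ̂_2 − s^{-1} ϑ̂_2 ϑ̂_1 = (s − s^{-1}) t^{2H-E_1-E_3-E_4-E_5} · 1 in A (here s = q^{1/2}). -/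
noncomputable section

variable {A : Type} [Ring A] [Algebra Rq A]

lemma single_mul_single_one (f g : Fin 7 → ℤ) :
    (AddMonoidAlgebra.single f (1:ℂ)) * AddMonoidAlgebra.single g 1
      = AddMonoidAlgebra.single (f+g) 1 := by
  simp [AddMonoidAlgebra.single_mul_single]

theorem quantum_commutation_one_two {A : Type} [Ring A] [Algebra Rq A] (zhat : ℤ × ℤ → A)
    (hz : IsQuantumTorus zhat) :
    sQ 1 • (θq₁ zhat * θq₂ zhat) - sQ (-1) • (θq₂ zhat * θq₁ zhat)
      = algebraMap Rq A ((sQ 1 - sQ (-1)) * tq 2 (-1) 0 (-1) (-1) (-1)) := by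
  obtain ⟨h0, hm⟩ := hz
  have h00 : zhat (0, 0) = 1 := h0
  simp only [θq₁, θq₂, add_mul, mul_add, smul_mul_assoc, mul_smul_comm, hm, smul_smul,
    Prod.mk_add_mk, detq]
  norm_num
  rw [h00]
  simp only [Algebra.algebraMap_eq_smul_one, smul_mul_assoc, mul_smul_comm, smul_smul, mul_one, sub_mul, smul_sub]
  simp only [sQ, tq, single_mul_single_one, Matrix.cons_add_cons, Matrix.empty_add_empty, smul_sub, smul_smul]
  norm_num
  abel

end
end

section
/- The quantum theta functions satisfy the commutation relation s ϑ̂_2 ϑ̂_3 − s^{-1} ϑ̂_3 ϑ̂_2 = (s − s^{-1}) t^{H-E_5} · 1 in A (here s = q^{1/2}). -/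
noncomputable section

variable {A : Type} [Ring A] [Algebra Rq A]

lemma smul_smul_aux {A : Type} [Ring A] [Algebra Rq A] (r r' : Rq) (a : A) :
    r • r' • a = (r * r') • a := smul_smul r r' a

set_option maxHeartbeats 2000000 in
theorem quantum_commutation_two_three {A : Type} [Ring A] [Algebra Rq A] (zhat : ℤ × ℤ → A)
    (hz : IsQuantumTorus zhat) :
    sQ 1 • (θq₂ zhat * θq₃ zhat) - sQ (-1) • (θq₃ zhat * θq₂ zhat)
      = algebraMap Rq A ((sQ 1 - sQ (-1)) * tq 1 0 0 0 0 (-1)) := by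
  obtain ⟨h0, hmul⟩ := hz
  simp only [θq₂, θq₃, mul_add, add_mul, mul_smul_comm, smul_mul_assoc, hmul, smul_smul,
    detq, h0, Algebra.algebraMap_eq_smul_one]
  have honep : (1 : ℤ × ℤ) = (1, 1) := rfl
  simp only [honep, Prod.mk_add_mk, smul_smul_aux]
  norm_num
  simp only [sQ, tq, AddMonoidAlgebra.single_mul_single, mul_one, Matrix.cons_add_cons,
    Matrix.empty_add_empty]
  norm_num
  simp only [show zhat (0, 0) = 1 from h0]
  match_scalars <;>
    (simp [sub_mul, add_mul, AddMonoidAlgebra.single_mul_single, Matrix.cons_add_cons, Matrix.empty_add_empty];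
      try abel)

end
end

section
/- The quantum theta functions satisfy the commutation relation s ϑ̂_3 ϑ̂_4 − s^{-1} ϑ̂_4 ϑ̂_3 = (s − s^{-1}) t^{H-E_2} · 1 in A (here s = q^{1/2}). -/
noncomputable section

variable {A : Type} [Ring A] [Algebra Rq A]

theorem quantum_commutation_three_four {A : Type} [Ring A] [Algebra Rq A] (zhat : ℤ × ℤ → A)
    (hz : IsQuantumTorus zhat) :
    sQ 1 • (θq₃ zhat * θq₄ zhat) - sQ (-1) • (θq₄ zhat * θq₃ zhat)
      = algebraMap Rq A ((sQ 1 - sQ (-1)) * tq 1 0 (-1) 0 0 0) := by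
  obtain ⟨h0, hm⟩ := hz
  have key : ∀ (r r' : Rq) (v w : ℤ × ℤ),
      (r • zhat v) * (r' • zhat w) = (r * (r' * sQ (detq v w))) • zhat (v + w) := by
    intro r r' v w
    rw [smul_mul_assoc, mul_smul_comm, hm, smul_smul, smul_smul, mul_assoc]
  unfold θq₃ θq₄
  simp only [add_mul, mul_add, key, smul_add, smul_smul, Algebra.algebraMap_eq_smul_one,
    sub_mul, sub_smul]
  simp only [sQ, tq, detq, AddMonoidAlgebra.single_mul_single, Prod.mk_add_mk,
    Matrix.cons_add_cons, Matrix.empty_add_empty, one_mul, mul_one]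
  norm_num
  rw [show ((0:ℤ), (0:ℤ)) = (0 : ℤ × ℤ) from rfl, h0]
  module

end
end

section
/- The quantum theta functions satisfy the reversed-order product expansion ϑ̂_3 · ϑ̂_1 = C_1·1 + s t^{H-E_1-E_2} ϑ̂_2 + s^{-1} t^{H-E_1-E_5} ϑ̂_4 in A (here s = q^{1/2}). -/
noncomputable section

variable {A : Type} [Ring A] [Algebra Rq A]

/-! Multiplying out, each of the nine products `ẑ^v ẑ^w` lands on `ẑ^{v+w}` with the factor
`s^{det(v,w)}`. The three with `v + w = 0` have `det(v,w) = 0` and their coefficients add up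
to `C₁`; the three with `det(v,w) = 1` are the terms of `s t^{H-E₁-E₂} ϑ̂₂`, and the three with
`det(v,w) = -1` are those of `s⁻¹ t^{H-E₁-E₅} ϑ̂₄`. -/

theorem sQ_zero : sQ 0 = 1 := by
  rw [sQ, AddMonoidAlgebra.one_def]
  congr 1
  ext i
  fin_cases i <;> rfl

theorem tq_mul_tq_s10 (a b₁ b₂ b₃ b₄ b₅ a' b₁' b₂' b₃' b₄' b₅' : ℤ) :
    tq a b₁ b₂ b₃ b₄ b₅ * tq a' b₁' b₂' b₃' b₄' b₅'
      = tq (a + a') (b₁ + b₁') (b₂ + b₂') (b₃ + b₃') (b₄ + b₄') (b₅ + b₅') := by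
  simp [tq, AddMonoidAlgebra.single_mul_single]

namespace IsQuantumTorus

variable {zhat : ℤ × ℤ → A}

theorem algebraMap_eq_smul (hz : IsQuantumTorus zhat) (r : Rq) :
    algebraMap Rq A r = r • zhat 0 := by
  rw [hz.1, Algebra.algebraMap_eq_smul_one]

theorem smul_mul_smul (hz : IsQuantumTorus zhat) (r r' : Rq) (v w : ℤ × ℤ) :
    (r • zhat v) * (r' • zhat w) = (r * r' * sQ (detq v w)) • zhat (v + w) := by
  rw [Algebra.smul_mul_assoc, Algebra.mul_smul_comm, hz.2, smul_smul, smul_smul, mul_assoc]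

theorem smul_mul (hz : IsQuantumTorus zhat) (r : Rq) (v w : ℤ × ℤ) :
    (r • zhat v) * zhat w = (r * sQ (detq v w)) • zhat (v + w) := by
  simpa using hz.smul_mul_smul r 1 v w

end IsQuantumTorus

theorem quantum_theta_three_mul_theta_one {A : Type} [Ring A] [Algebra Rq A] (zhat : ℤ × ℤ → A)
    (hz : IsQuantumTorus zhat) :
    θq₃ zhat * θq₁ zhat = algebraMap Rq A Cq₁
      + (sQ 1 * tq 1 (-1) (-1) 0 0 0) • θq₂ zhat
      + (sQ (-1) * tq 1 (-1) 0 0 0 (-1)) • θq₄ zhat := by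
  rw [hz.algebraMap_eq_smul, θq₃, θq₁, θq₂, θq₄, Cq₁]
  simp only [mul_add, add_mul, hz.smul_mul_smul, hz.smul_mul, smul_add, smul_smul, add_smul,
    Prod.mk_add_mk]
  norm_num [detq]
  match_scalars <;>
    simp only [mul_one, sQ_zero, mul_comm (sQ _), mul_right_comm _ (sQ _), tq_mul_tq_s10] <;>
    norm_num

end
end

section
/- Consistency of the scattering of two transversal initial walls (pentagon identity): any ℂ[[a,b]]-algebra endomorphisms A_1, A_2, A_{12} of B that are continuous for the (a,b)-adic topology and satisfy A_1(x) = x, A_1(y) = (1+ax)y; A_2(x) = (1+by)^{-1}x, A_2(y) = y; A_{12}(x) = (1+abxy)^{-1}x, A_{12}(y) = (1+abxy)y, satisfy the composition identity A_1 ∘ A_2 = A_2 ∘ A_{12} ∘ A_1. In particular, the composition of the wall-crossing transformations around the intersection point of two walls whose primitive direction vectors have determinant ±1 becomes the identity after inserting the single new wall in the sum direction with wall-crossing function 1+abxy. -/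
/- STATEMENT 12: Consistency of the scattering of two transversal initial walls
(pentagon identity): for ℂ[[a,b]]-algebra endomorphisms A₁, A₂, A₁₂ of
B = ℂ[x^{±1},y^{±1}][[a,b]], continuous for the (a,b)-adic topology, with
A₁(x) = x, A₁(y) = (1+ax)y; A₂(x) = (1+by)⁻¹x, A₂(y) = y;
A₁₂(x) = (1+abxy)⁻¹x, A₁₂(y) = (1+abxy)y, one has A₁ ∘ A₂ = A₂ ∘ A₁₂ ∘ A₁. -/

noncomputable section

/-- `P = ℂ[x^{±1}, y^{±1}]`, the Laurent polynomial ring in two variables over `ℂ`,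
realized as the monoid algebra of `ℤ²`. -/
abbrev Pw : Type := AddMonoidAlgebra ℂ (ℤ × ℤ)

/-- `B = P[[a,b]]`, formal power series in two further variables `a, b` over `P`. -/
abbrev Bw : Type := MvPowerSeries (Fin 2) Pw

/-- `x ∈ B`. -/
def xB : Bw := (MvPowerSeries.C : Pw →+* MvPowerSeries (Fin 2) Pw) (AddMonoidAlgebra.single (1, 0) 1)

/-- `y ∈ B`. -/
def yB : Bw := (MvPowerSeries.C : Pw →+* MvPowerSeries (Fin 2) Pw) (AddMonoidAlgebra.single (0, 1) 1)

/-- `a ∈ B`. -/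
def aB : Bw := MvPowerSeries.X 0

/-- `b ∈ B`. -/
def bB : Bw := MvPowerSeries.X 1

/-- `ℂ[[a,b]]`. -/
abbrev Sw : Type := MvPowerSeries (Fin 2) ℂ

/-- The `(a,b)`-adic topology on `B`, i.e. the topology of the ideal `(a, b) ⊆ B`. -/
def adicTopBw : TopologicalSpace Bw := (Ideal.span {aB, bB}).adicTopology

/-- `(1+ax)⁻¹ ∈ B` (the constant term of `1+ax` is `1`, a unit). -/
def invAX : Bw := MvPowerSeries.invOfUnit (1 + aB * xB) 1

/-- `(1+by)⁻¹ ∈ B`. -/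
def invBY : Bw := MvPowerSeries.invOfUnit (1 + bB * yB) 1

/-- `(1+abxy)⁻¹ ∈ B`. -/
def invABXY : Bw := MvPowerSeries.invOfUnit (1 + aB * bB * xB * yB) 1

/-! Each side of the identity is a continuous `ℂ[[a,b]]`-algebra endomorphism of `B`, and such
an endomorphism is determined by its values on `x` and `y`: it fixes `ℂ`, `a` and `b`, so these
values determine it on the polynomials in `a, b` over `ℂ[x^{±1}, y^{±1}]`, which are `(a,b)`-adically
dense since `f - truncTotal n f ∈ (a,b)^n`; and `B` is `(a,b)`-adically Hausdorff. On `x` and `y`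
the identity reduces to `1 + by + abxy = (1 + by)(1 + abxy/(1 + by))` and
`1 + by + ax + abxy = (1 + ax)(1 + by)`. -/

theorem Ideal.exists_pow_sub_mem_of_continuous_adic {R T : Type*} [CommRing R] [CommRing T]
    {J : Ideal R} {I : Ideal T} {φ : R → T}
    (hφ : @Continuous R T J.adicTopology I.adicTopology φ) (f : R) (n : ℕ) :
    ∃ m, ∀ g, g - f ∈ J ^ m → φ g - φ f ∈ I ^ n := by
  obtain ⟨m, -, hm⟩ := ((J.hasBasis_nhds_adic f).tendsto_iff (I.hasBasis_nhds_adic (φ f))).1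
    (@Continuous.tendsto R T J.adicTopology I.adicTopology φ hφ f) n trivial
  refine ⟨m, fun g hg => ?_⟩
  obtain ⟨d, hd, hφg⟩ := hm _ ⟨g - f, hg, add_sub_cancel f g⟩
  rwa [← hφg, add_sub_cancel_left]

namespace MonoidHom

theorem ext_mint_prod {M : Type*} [CommMonoid M] {f g : Multiplicative (ℤ × ℤ) →* M}
    (h₁ : f (.ofAdd (1, 0)) = g (.ofAdd (1, 0))) (h₂ : f (.ofAdd (0, 1)) = g (.ofAdd (0, 1))) :
    f = g := by
  apply toAdditiveRight.injective
  rw [← AddMonoidHom.coprod_unique (toAdditiveRight f),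
    ← AddMonoidHom.coprod_unique (toAdditiveRight g)]
  congr 1 <;> exact AddMonoidHom.ext_int ‹_›

end MonoidHom

namespace AddMonoidAlgebra

theorem ringHom_ext_int_prod {k S : Type*} [Semiring k] [CommSemiring S]
    {F G : AddMonoidAlgebra k (ℤ × ℤ) →+* S} (hC : ∀ r, F (single 0 r) = G (single 0 r))
    (h₁ : F (single (1, 0) 1) = G (single (1, 0) 1))
    (h₂ : F (single (0, 1) 1) = G (single (0, 1) 1)) : F = G :=
  ringHom_ext' (RingHom.ext hC) (MonoidHom.ext_mint_prod h₁ h₂)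

end AddMonoidAlgebra

namespace MvPowerSeries

open Finsupp

variable {σ R : Type*}

theorem le_order_of_mem_pow_span_X [CommSemiring R] {f : MvPowerSeries σ R} {n : ℕ}
    (hf : f ∈ Ideal.span (Set.range X) ^ n) : n ≤ f.order := by
  induction n generalizing f with
  | zero => simp
  | succ n ih =>
    rw [pow_succ] at hf
    refine Submodule.mul_induction_on hf (fun r hr s hs => ?_) (fun r s hr hs => ?_)
    · have hs : constantCoeff s = 0 := by
        refine (Ideal.span_le (I := RingHom.ker constantCoeff)).2 ?_ hs
        rintro _ ⟨i, rfl⟩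
        exact constantCoeff_X i
      calc ((n + 1 : ℕ) : ℕ∞) ≤ r.order + s.order := by
            push_cast
            exact add_le_add (ih hr) (one_le_order_iff_constCoeff_eq_zero.2 hs)
        _ ≤ (r * s).order := le_order_mul
    · exact (le_min hr hs).trans min_order_le_add

theorem coe_mem_pow_span_X [CommSemiring R] {p : MvPolynomial σ R} {n : ℕ}
    (hp : p ∈ MvPolynomial.idealOfVars σ R ^ n) :
    (p : MvPowerSeries σ R) ∈ Ideal.span (Set.range X) ^ n := by
  have hmap : (MvPolynomial.idealOfVars σ R).map MvPolynomial.coeToMvPowerSeries.ringHom =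
      Ideal.span (Set.range X) := by
    rw [Ideal.map_span, ← Set.range_comp]
    congr 2
    ext1 i
    exact MvPolynomial.coe_X (R := R) i
  rw [← hmap, ← Ideal.map_pow]
  exact Ideal.mem_map_of_mem _ hp

theorem sub_truncTotal_mem_pow_span_X [Finite σ] [CommRing R] (f : MvPowerSeries σ R) (n : ℕ) :
    f - truncTotal n f ∈ Ideal.span (Set.range X) ^ n := by
  -- The truncations are Cauchy; their limit in the adically complete ring has the same
  -- coefficients as `f`.
  obtain ⟨L, hL⟩ := IsPrecomplete.prec (I := Ideal.span (Set.range (X : σ → MvPowerSeries σ R)))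
    inferInstance (f := fun k => (truncTotal k f : MvPowerSeries σ R)) fun {l m} hlm => by
      have h := coe_mem_pow_span_X (truncTotal_sub_truncTotal_mem_pow_idealOfVars le_rfl hlm f)
      rw [← MvPolynomial.coeToMvPowerSeries.ringHom_apply, map_sub] at h
      rwa [SModEq.sub_mem, smul_eq_mul, Ideal.mul_top]
  have hL' : ∀ k, (truncTotal k f : MvPowerSeries σ R) - L ∈ Ideal.span (Set.range X) ^ k := by
    intro k
    simpa only [SModEq.sub_mem, smul_eq_mul, Ideal.mul_top] using hL k
  have hfL : f = L := by
    ext d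
    have hd : degree d < degree d + 1 := Nat.lt_succ_self _
    have hzero := coeff_of_lt_order (d := d)
      ((ENat.natCast_lt_natCast.2 hd).trans_le (le_order_of_mem_pow_span_X (hL' (degree d + 1))))
    rwa [map_sub, MvPolynomial.coeff_coe, coeff_truncTotal _ hd, sub_eq_zero] at hzero
  rw [show f - truncTotal n f = -(truncTotal n f - L) by rw [neg_sub, ← hfL]]
  exact neg_mem (hL' n)

theorem eq_of_continuous_of_coe_eq {T : Type*} [Finite σ] [CommRing R] [CommRing T]
    (I : Ideal T) [IsHausdorff I T] {φ ψ : MvPowerSeries σ R → T}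
    (hφ : @Continuous _ _ (Ideal.span (Set.range X)).adicTopology I.adicTopology φ)
    (hψ : @Continuous _ _ (Ideal.span (Set.range X)).adicTopology I.adicTopology ψ)
    (h : ∀ p : MvPolynomial σ R, φ p = ψ p) : φ = ψ := by
  refine IsHausdorff.funext' I fun n f => Ideal.Quotient.mk_eq_mk_iff_sub_mem _ _ |>.2 ?_
  obtain ⟨k, hk⟩ := Ideal.exists_pow_sub_mem_of_continuous_adic hφ f n
  obtain ⟨l, hl⟩ := Ideal.exists_pow_sub_mem_of_continuous_adic hψ f n
  set p := truncTotal (max k l) f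
  have hp : (p : MvPowerSeries σ R) - f ∈ Ideal.span (Set.range X) ^ max k l := by
    rw [← neg_sub]
    exact neg_mem (sub_truncTotal_mem_pow_span_X f _)
  rw [show φ f - ψ f = (ψ p - ψ f) - (φ p - φ f) by rw [h]; ring]
  exact sub_mem (hl _ (Ideal.pow_le_pow_right (le_max_right k l) hp))
    (hk _ (Ideal.pow_le_pow_right (le_max_left k l) hp))

theorem algHom_apply_X {A : Type*} [CommSemiring R] [CommSemiring A]
    [Algebra R A] (φ : MvPowerSeries σ A →ₐ[MvPowerSeries σ R] MvPowerSeries σ A) (i : σ) :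
    φ (X i) = X i := by
  simpa [algebraMap_apply'', map_X] using φ.commutes (X i)

theorem algHom_apply_C_algebraMap {A : Type*} [CommSemiring R] [CommSemiring A]
    [Algebra R A] (φ : MvPowerSeries σ A →ₐ[MvPowerSeries σ R] MvPowerSeries σ A) (r : R) :
    φ (C (algebraMap R A r)) = C (algebraMap R A r) := by
  simpa [algebraMap_apply'', map_C] using φ.commutes (C r)

end MvPowerSeries

theorem span_aB_bB : Ideal.span {aB, bB} = Ideal.span (Set.range MvPowerSeries.X) := by
  congr 1
  ext f
  simp [aB, bB, Fin.exists_fin_two, eq_comm]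

theorem algHom_eq_of_continuous_of_apply_xB_yB {φ ψ : Bw →ₐ[Sw] Bw}
    (hφ : @Continuous Bw Bw adicTopBw adicTopBw φ) (hψ : @Continuous Bw Bw adicTopBw adicTopBw ψ)
    (hx : φ xB = ψ xB) (hy : φ yB = ψ yB) : φ = ψ := by
  have hC : φ.toRingHom.comp MvPowerSeries.C = ψ.toRingHom.comp MvPowerSeries.C :=
    AddMonoidAlgebra.ringHom_ext_int_prod (fun r => by
      simpa using (MvPowerSeries.algHom_apply_C_algebraMap φ r).trans
        (MvPowerSeries.algHom_apply_C_algebraMap ψ r).symm) hx hy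
  have hpoly : ∀ p : MvPolynomial (Fin 2) Pw, φ p = ψ p := fun p => RingHom.congr_fun
    (MvPolynomial.ringHom_ext
      (f := φ.toRingHom.comp MvPolynomial.coeToMvPowerSeries.ringHom)
      (g := ψ.toRingHom.comp MvPolynomial.coeToMvPowerSeries.ringHom)
      (fun r => by simpa using RingHom.congr_fun hC r)
      (fun i => by simp [MvPowerSeries.algHom_apply_X])) p
  rw [adicTopBw, span_aB_bB] at hφ hψ
  exact AlgHom.ext (congrFun (MvPowerSeries.eq_of_continuous_of_coe_eq _ hφ hψ hpoly))

theorem algHom_apply_aB (A : Bw →ₐ[Sw] Bw) : A aB = aB := MvPowerSeries.algHom_apply_X A 0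

theorem algHom_apply_bB (A : Bw →ₐ[Sw] Bw) : A bB = bB := MvPowerSeries.algHom_apply_X A 1

theorem mul_invBY : (1 + bB * yB) * invBY = 1 :=
  MvPowerSeries.mul_invOfUnit _ 1 (by simp [bB])

theorem mul_invABXY : (1 + aB * bB * xB * yB) * invABXY = 1 :=
  MvPowerSeries.mul_invOfUnit _ 1 (by simp [aB])

/-- The pentagon identity `A₁ ∘ A₂ = A₂ ∘ A₁₂ ∘ A₁` for the wall-crossing
transformations of the walls with functions `1+ax`, `1+by`, `1+abxy`: the composition
of the wall-crossing transformations around the intersection point of two transversal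
walls becomes the identity after inserting the single new wall in the sum direction
with wall-crossing function `1+abxy`. -/
theorem pentagon_identity (A₁ A₂ A₁₂ : Bw →ₐ[Sw] Bw)
    (hA₁cont : @Continuous Bw Bw adicTopBw adicTopBw A₁)
    (hA₂cont : @Continuous Bw Bw adicTopBw adicTopBw A₂)
    (hA₁₂cont : @Continuous Bw Bw adicTopBw adicTopBw A₁₂)
    (hA₁x : A₁ xB = xB)
    (hA₁y : A₁ yB = (1 + aB * xB) * yB)
    (hA₂x : A₂ xB = invBY * xB)
    (hA₂y : A₂ yB = yB)
    (hA₁₂x : A₁₂ xB = invABXY * xB)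
    (hA₁₂y : A₁₂ yB = (1 + aB * bB * xB * yB) * yB) :
    A₁.comp A₂ = A₂.comp (A₁₂.comp A₁) := by
  have h₁ : (1 + bB * ((1 + aB * xB) * yB)) * A₁ invBY = 1 := by
    simpa [algHom_apply_bB, hA₁y] using congrArg A₁ mul_invBY
  have h₂ : (1 + aB * bB * (invBY * xB) * yB) * A₂ invABXY = 1 := by
    simpa [algHom_apply_aB, algHom_apply_bB, hA₂x, hA₂y] using
      congrArg A₂ mul_invABXY
  let _ : TopologicalSpace Bw := adicTopBw
  refine algHom_eq_of_continuous_of_apply_xB_yB (hA₁cont.comp hA₂cont)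
    (hA₂cont.comp (hA₁₂cont.comp hA₁cont)) ?_ ?_
  · simp only [AlgHom.comp_apply, map_mul, hA₁x, hA₂x, hA₁₂x]
    apply (IsUnit.of_mul_eq_one _ h₁).mul_left_cancel
    linear_combination xB * h₁ - xB * h₂ - A₂ invABXY * xB * mul_invBY
  · simp only [AlgHom.comp_apply, map_mul, map_add, map_one, hA₁y, hA₂x, hA₂y, hA₁₂x, hA₁₂y,
      algHom_apply_aB, algHom_apply_bB]
    linear_combination -aB * xB * yB * mul_invBY - aB * invBY * xB * yB * h₂

end
end

section
/- A wall-crossing transformation is an algebra automorphism: let R be a commutative ring, B = R[x^{±1}, y^{±1}][[u]], let v = (v_1, v_2) ∈ ℤ² and n = (n_1, n_2) ∈ ℤ² with n_1v_1 + n_2v_2 = 0, let c ∈ R, and set f = 1 + u·c·x^{v_1}y^{v_2} (a unit in B). Then the unique R[[u]]-linear, (u)-adically continuous map θ_{f,n} : B → B with θ_{f,n}(x^p y^q) = f^{n_1p + n_2q} x^p y^q for all (p,q) ∈ ℤ² is an R[[u]]-algebra automorphism of B, whose inverse is θ_{f^{-1},n}. -/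
/-!
Monomials `x^p y^q` span a dense `R[[u]]`-submodule of `B` for the `u`-adic topology, which is
Hausdorff, so a continuous `R[[u]]`-linear endomorphism of `B` is determined by its values on
monomials. On monomials `θ` is multiplicative because `w ↦ ⟨n, w⟩` is additive, hence it is
multiplicative everywhere by density. As `⟨n, v⟩ = 0`, both `θ` and `θ'` fix `f` and therefore
all its powers, so `θ' ∘ θ` and `θ ∘ θ'` act on monomials as multiplication by
`f^{⟨n,w⟩} f^{-⟨n,w⟩} = 1` and agree with the identity.
-/

noncomputable section

/-- `R[x^{±1}, y^{±1}]`, the Laurent polynomial ring in two variables over `R`,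
realized as the monoid algebra of `ℤ²`. -/
abbrev Pwc (R : Type) [CommRing R] : Type := AddMonoidAlgebra R (ℤ × ℤ)

/-- `B = R[x^{±1}, y^{±1}][[u]]`. -/
abbrev Bwc (R : Type) [CommRing R] : Type := PowerSeries (Pwc R)

/-- The Laurent monomial `x^p y^q`, viewed as an element of `B`. -/
def zmon (R : Type) [CommRing R] (w : ℤ × ℤ) : Bwc R :=
  PowerSeries.C (R := Pwc R) (AddMonoidAlgebra.single w 1)

/-- The `(u)`-adic topology on `B`. -/
def adicTopBwc (R : Type) [CommRing R] : TopologicalSpace (Bwc R) :=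
  (Ideal.span {(PowerSeries.X : Bwc R)}).adicTopology

open PowerSeries

-- For `A = Pwc R` this is `adicTopBwc R`.
local instance {A : Type*} [CommRing A] : TopologicalSpace A⟦X⟧ :=
  (Ideal.span {(X : A⟦X⟧)}).adicTopology

local instance {A : Type*} [CommRing A] : IsTopologicalRing A⟦X⟧ :=
  (Ideal.span {(X : A⟦X⟧)}).nonarchimedean.toIsTopologicalRing

local instance {A : Type*} [CommRing A] : T2Space A⟦X⟧ :=
  (IsAdic.isHausdorff_iff rfl).mp inferInstance

namespace PowerSeries

variable {R A : Type*} [CommRing R] [CommRing A] [Algebra R A]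

theorem trunc_sub_mem_span_X_pow (f : A⟦X⟧) (m : ℕ) :
    (f.trunc m : A⟦X⟧) - f ∈ Ideal.span {(X : A⟦X⟧)} ^ m := by
  rw [Ideal.span_singleton_pow, Ideal.mem_span_singleton, ← dvd_neg, neg_sub]
  exact ⟨_, sub_eq_of_eq_add (eq_X_pow_mul_shift_add_trunc m f)⟩

theorem dense_range_coe_polynomial : Dense (Set.range ((↑) : Polynomial A → A⟦X⟧)) :=
  fun f ↦ (mem_closure_iff_nhds_basis ((Ideal.span {X}).hasBasis_nhds_adic f)).mpr fun m _ ↦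
    ⟨_, ⟨_, rfl⟩, _, trunc_sub_mem_span_X_pow f m, add_sub_cancel _ _⟩

theorem coe_polynomial_mem_span_C_image {S : Set A} (hS : Submodule.span R S = ⊤)
    (p : Polynomial A) : (p : A⟦X⟧) ∈ Submodule.span R⟦X⟧ (C '' S) := by
  have hC : ∀ a : A, C a ∈ Submodule.span R⟦X⟧ (C '' S) := by
    intro a
    induction (hS ▸ Submodule.mem_top : a ∈ Submodule.span R S) using Submodule.span_induction with
    | mem s hs => exact Submodule.subset_span ⟨s, hs, rfl⟩
    | zero => rw [map_zero]; exact zero_mem _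
    | add a b _ _ ha hb => rw [map_add]; exact add_mem ha hb
    | smul r a _ ha =>
      rw [Algebra.smul_def, map_mul, ← map_C (algebraMap R A)]
      exact Submodule.smul_mem _ (C r) ha
  induction p using Polynomial.induction_on' with
  | add p q hp hq => rw [Polynomial.coe_add]; exact add_mem hp hq
  | monomial k a =>
    rw [Polynomial.coe_monomial, monomial_eq_C_mul_X_pow, mul_comm, ← map_X (algebraMap R A),
      ← map_pow]
    exact Submodule.smul_mem _ (X ^ k) (hC a)

theorem dense_span_C_image {S : Set A} (hS : Submodule.span R S = ⊤) :
    Dense (Submodule.span R⟦X⟧ (C '' S) : Set A⟦X⟧) :=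
  dense_range_coe_polynomial.mono <| Set.range_subset_iff.mpr <| coe_polynomial_mem_span_C_image hS

theorem linearMap_ext_of_continuous {S : Set A} (hS : Submodule.span R S = ⊤)
    {φ ψ : A⟦X⟧ →ₗ[R⟦X⟧] A⟦X⟧} (hφ : Continuous φ) (hψ : Continuous ψ)
    (h : ∀ s ∈ S, φ (C s) = ψ (C s)) : φ = ψ :=
  LinearMap.coe_injective <| Continuous.ext_on (dense_span_C_image hS) hφ hψ <|
    LinearMap.eqOn_span' <| Set.forall_mem_image.mpr h

theorem map_mul_of_continuous {S : Set A} (hS : Submodule.span R S = ⊤)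
    {φ : A⟦X⟧ →ₗ[R⟦X⟧] A⟦X⟧} (hφ : Continuous φ)
    (h : ∀ s ∈ S, ∀ t ∈ S, φ (C s * C t) = φ (C s) * φ (C t)) (f g : A⟦X⟧) :
    φ (f * g) = φ f * φ g := by
  have hC : ∀ s ∈ S, ∀ g, φ (C s * g) = φ (C s) * φ g := fun s hs ↦
    LinearMap.congr_fun (linearMap_ext_of_continuous (φ := φ ∘ₗ .mulLeft R⟦X⟧ (C s))
      (ψ := .mulLeft R⟦X⟧ (φ (C s)) ∘ₗ φ) hS (hφ.comp (continuous_const_mul _))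
      ((continuous_const_mul _).comp hφ) (h s hs))
  exact LinearMap.congr_fun (linearMap_ext_of_continuous (φ := φ ∘ₗ .mulRight R⟦X⟧ g)
    (ψ := .mulRight R⟦X⟧ (φ g) ∘ₗ φ) hS (hφ.comp (continuous_mul_const _))
    ((continuous_mul_const _).comp hφ) fun s hs ↦ hC s hs g) f

end PowerSeries

theorem AddMonoidAlgebra.span_range_of' (k G : Type*) [Semiring k] :
    Submodule.span k (Set.range (AddMonoidAlgebra.of' k G)) = ⊤ :=
  Submodule.eq_top_iff'.mpr fun f ↦
    Submodule.span_mono (Set.image_subset_range _ _) (mem_span_support_coeff f)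

theorem Units.coe_zpow_eq_of_map_eq {M : Type*} [Monoid M] (φ : M →* M) {u : Mˣ}
    (h : φ u = u) (k : ℤ) : φ ↑(u ^ k) = ↑(u ^ k) := by
  have hu : Units.map φ u = u := Units.ext h
  rw [← Units.coe_map, map_zpow, hu]

variable {R : Type} [CommRing R]

theorem zmon_add (w w' : ℤ × ℤ) : zmon R (w + w') = zmon R w * zmon R w' := by
  simp [zmon, ← map_mul, AddMonoidAlgebra.single_mul_single]

theorem zmon_zero : zmon R 0 = 1 := by
  simp [zmon, ← AddMonoidAlgebra.one_def]

theorem X_mul_C_single_eq_smul_zmon (v : ℤ × ℤ) (c : R) :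
    (X * C (AddMonoidAlgebra.single v c) : Bwc R) = (X * C c : PowerSeries R) • zmon R v := by
  rw [Algebra.smul_def, algebraMap_apply'', map_mul, map_X, map_C, zmon, mul_assoc, ← map_mul,
    AddMonoidAlgebra.coe_algebraMap]
  simp [AddMonoidAlgebra.single_mul_single]

def IsWallCrossing (F : (Bwc R)ˣ) (n : ℤ × ℤ) (θ : Bwc R →ₗ[PowerSeries R] Bwc R) : Prop :=
  ∀ w : ℤ × ℤ, θ (zmon R w) = ((F ^ (n.1 * w.1 + n.2 * w.2) : (Bwc R)ˣ) : Bwc R) * zmon R w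

namespace IsWallCrossing

variable {F G : (Bwc R)ˣ} {n : ℤ × ℤ} {θ θ' : Bwc R →ₗ[PowerSeries R] Bwc R}

theorem map_one (hθ : IsWallCrossing F n θ) : θ 1 = 1 := by
  simpa [zmon_zero] using hθ 0

theorem map_mul (hθ : IsWallCrossing F n θ) (hc : Continuous θ) (g h : Bwc R) :
    θ (g * h) = θ g * θ h := by
  refine map_mul_of_continuous (AddMonoidAlgebra.span_range_of' R (ℤ × ℤ)) hc ?_ g h
  rintro _ ⟨w, rfl⟩ _ ⟨w', rfl⟩
  change θ (zmon R w * zmon R w') = θ (zmon R w) * θ (zmon R w')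
  rw [← zmon_add, hθ, hθ, hθ, zmon_add, Prod.fst_add, Prod.snd_add,
    show n.1 * (w.1 + w'.1) + n.2 * (w.2 + w'.2)
      = (n.1 * w.1 + n.2 * w.2) + (n.1 * w'.1 + n.2 * w'.2) by ring, zpow_add, Units.val_mul]
  ring

theorem map_one_add_X_mul_C_single (hθ : IsWallCrossing F n θ) {v : ℤ × ℤ}
    (hnv : n.1 * v.1 + n.2 * v.2 = 0) (c : R) :
    θ (1 + X * C (AddMonoidAlgebra.single v c)) = 1 + X * C (AddMonoidAlgebra.single v c) := by
  rw [X_mul_C_single_eq_smul_zmon, map_add, map_smul, hθ.map_one, hθ, hnv, zpow_zero,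
    Units.val_one, one_mul]

theorem map_coe_zpow (hθ : IsWallCrossing F n θ) (hc : Continuous θ) {f : (Bwc R)ˣ}
    (hf : θ f = f) (k : ℤ) : θ ↑(f ^ k) = ↑(f ^ k) :=
  Units.coe_zpow_eq_of_map_eq (AlgHom.ofLinearMap θ hθ.map_one (hθ.map_mul hc)).toMonoidHom hf k

theorem comp (hθ : IsWallCrossing F n θ) (hθ' : IsWallCrossing G n θ') (hc' : Continuous θ')
    (hfix : ∀ k : ℤ, θ' ↑(F ^ k) = ↑(F ^ k)) : IsWallCrossing (G * F) n (θ' ∘ₗ θ) := by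
  intro w
  rw [LinearMap.comp_apply, hθ, hθ'.map_mul hc', hfix, hθ', mul_zpow, Units.val_mul]
  ring

theorem eq_id (hθ : IsWallCrossing 1 n θ) (hc : Continuous θ) : θ = LinearMap.id :=
  linearMap_ext_of_continuous (AddMonoidAlgebra.span_range_of' R (ℤ × ℤ)) hc continuous_id <| by
    rintro _ ⟨w, rfl⟩
    change θ (zmon R w) = zmon R w
    simpa using hθ w

end IsWallCrossing

/-- A wall-crossing transformation `θ_{f,n}` is an `R[[u]]`-algebra automorphism of
`B = R[x^{±1},y^{±1}][[u]]`, with inverse the wall-crossing transformation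
`θ_{f⁻¹,n}`.  Here `f = 1 + u·c·x^{v₁}y^{v₂}` is a unit in `B`, `⟨n,v⟩ = 0`, and
`θ, θ'` are any `R[[u]]`-linear, `(u)`-adically continuous maps acting on Laurent
monomials by `x^p y^q ↦ f^{±(n₁p+n₂q)} x^p y^q`. -/
theorem wall_crossing_is_algebra_automorphism (R : Type) [CommRing R]
    (v n : ℤ × ℤ) (hnv : n.1 * v.1 + n.2 * v.2 = 0) (c : R)
    (f : (Bwc R)ˣ)
    (hf : (f : Bwc R) = 1 + PowerSeries.X * PowerSeries.C (R := Pwc R) (AddMonoidAlgebra.single v c))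
    (θ θ' : Bwc R →ₗ[PowerSeries R] Bwc R)
    (hθcont : @Continuous (Bwc R) (Bwc R) (adicTopBwc R) (adicTopBwc R) θ)
    (hθ'cont : @Continuous (Bwc R) (Bwc R) (adicTopBwc R) (adicTopBwc R) θ')
    (hθ : ∀ w : ℤ × ℤ, θ (zmon R w) = ((f ^ (n.1 * w.1 + n.2 * w.2) : (Bwc R)ˣ) : Bwc R) * zmon R w)
    (hθ' : ∀ w : ℤ × ℤ,
      θ' (zmon R w) = ((f⁻¹ ^ (n.1 * w.1 + n.2 * w.2) : (Bwc R)ˣ) : Bwc R) * zmon R w) :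
    θ 1 = 1 ∧ (∀ g h : Bwc R, θ (g * h) = θ g * θ h) ∧
      Function.LeftInverse θ' θ ∧ Function.RightInverse θ' θ := by
  replace hθ : IsWallCrossing f n θ := hθ
  replace hθ' : IsWallCrossing f⁻¹ n θ' := hθ'
  have hc : Continuous θ := hθcont
  have hc' : Continuous θ' := hθ'cont
  have hfix : ∀ k : ℤ, θ ↑(f ^ k) = ↑(f ^ k) :=
    hθ.map_coe_zpow hc (hf ▸ hθ.map_one_add_X_mul_C_single hnv c)
  have hfix' : ∀ k : ℤ, θ' ↑(f ^ k) = ↑(f ^ k) :=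
    hθ'.map_coe_zpow hc' (hf ▸ hθ'.map_one_add_X_mul_C_single hnv c)
  have hθ'θ : θ' ∘ₗ θ = LinearMap.id := by
    have h := hθ.comp hθ' hc' hfix'
    rw [inv_mul_cancel] at h
    exact h.eq_id (hc'.comp hc)
  have hθθ' : θ ∘ₗ θ' = LinearMap.id := by
    have h := hθ'.comp hθ hc fun k ↦ by rw [inv_zpow', hfix]
    rw [mul_inv_cancel] at h
    exact h.eq_id (hc.comp hc')
  exact ⟨hθ.map_one, hθ.map_mul hc, LinearMap.congr_fun hθ'θ, LinearMap.congr_fun hθθ'⟩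

end
end

section
/- The theta function ϑ_1 of the quartic del Pezzo surface is obtained from the initial monomial x^{-1}y^{-1} by crossing the two walls with functions 1+t^{H-E_4-E_5}x and 1+t^{E_1-E_5}y^{-1}: for any field homomorphisms σ_1, σ_2 : K → K fixing ℂ(t_H, t_1, …, t_5) pointwise and satisfying σ_1(x) = x, σ_1(y) = y(1+t^{H-E_4-E_5}x)^{-1}, σ_2(x) = x(1+t^{E_1-E_5}y^{-1})^{-1}, σ_2(y) = y, one has σ_2(σ_1(x^{-1}y^{-1})) = ϑ_1. -/
set_option maxHeartbeats 1000000
set_option synthInstance.maxHeartbeats 400000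


noncomputable section

/-- `K = ℂ(t_H, t₁, t₂, t₃, t₄, t₅, x, y)`, the field of rational functions in eight
variables over `ℂ` (index 0 is `t_H`, indices 1–5 are `t₁,…,t₅`, index 6 is `x`,
index 7 is `y`). -/
abbrev Kdp : Type := FractionRing (MvPolynomial (Fin 8) ℂ)

/-- The `i`-th variable, as an element of `K`. -/
def vK (i : Fin 8) : Kdp :=
  algebraMap (MvPolynomial (Fin 8) ℂ) Kdp (MvPolynomial.X i)

/-- The monomial `t^{aH + b₁E₁ + ⋯ + b₅E₅} = t_H^a t₁^{b₁} ⋯ t₅^{b₅} ∈ K`. -/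
def tK (a b1 b2 b3 b4 b5 : ℤ) : Kdp :=
  vK 0 ^ a * vK 1 ^ b1 * vK 2 ^ b2 * vK 3 ^ b3 * vK 4 ^ b4 * vK 5 ^ b5

/-- `x ∈ K`. -/
def xK : Kdp := vK 6

/-- `y ∈ K`. -/
def yK : Kdp := vK 7

/-- The subfield `ℂ(t_H, t₁, …, t₅) ⊆ K`. -/
def Ft : Subfield Kdp :=
  Subfield.closure (Set.range (algebraMap ℂ Kdp) ∪ {vK 0, vK 1, vK 2, vK 3, vK 4, vK 5})

/-- `ϑ₁ = x⁻¹y⁻¹ + t^{E₁-E₅} x⁻¹y⁻² + t^{H-E₄-E₅} y⁻¹ ∈ K`. -/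
def θK₁ : Kdp :=
  xK⁻¹ * yK⁻¹ + tK 0 1 0 0 0 (-1) * xK⁻¹ * yK ^ (-2 : ℤ) + tK 1 0 0 0 (-1) (-1) * yK⁻¹

/-- `ϑ₂ = x⁻¹ + t^{H-E₁-E₃} y + t^{E₁-E₅} x⁻¹y⁻¹ ∈ K`. -/
def θK₂ : Kdp :=
  xK⁻¹ + tK 1 (-1) 0 (-1) 0 0 * yK + tK 0 1 0 0 0 (-1) * xK⁻¹ * yK⁻¹

/-- `ϑ₃ = t^{H-E₁} xy + t^{2H-2E₁-E₂-E₃} xy² + t^{H-E₁-E₂} y ∈ K`. -/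
def θK₃ : Kdp :=
  tK 1 (-1) 0 0 0 0 * xK * yK + tK 2 (-2) (-1) (-1) 0 0 * xK * yK ^ 2
    + tK 1 (-1) (-1) 0 0 0 * yK

/-- `ϑ₄ = t^{E₁} y⁻¹ + t^{H-E₄} x + t^{2H-E₁-E₂-E₃-E₄} xy ∈ K`. -/
def θK₄ : Kdp :=
  tK 0 1 0 0 0 0 * yK⁻¹ + tK 1 0 0 0 (-1) 0 * xK + tK 2 (-1) (-1) (-1) (-1) 0 * xK * yK

lemma fne (p : MvPolynomial (Fin 8) ℂ) (hp : p ≠ 0) :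
    algebraMap (MvPolynomial (Fin 8) ℂ) Kdp p ≠ 0 := by
  exact (map_ne_zero_iff (algebraMap (MvPolynomial (Fin 8) ℂ) Kdp) (IsFractionRing.injective (MvPolynomial (Fin 8) ℂ) Kdp)).mpr hp

lemma vK_ne (i : Fin 8) : vK i ≠ 0 := fne _ (MvPolynomial.X_ne_zero i)

lemma vK_mem_Ft (i : Fin 8) (hi : (i:ℕ) ≤ 5) : vK i ∈ Ft := by
  apply Subfield.subset_closure
  right
  fin_cases i <;> simp_all

lemma tK_mem_Ft (a b1 b2 b3 b4 b5 : ℤ) : tK a b1 b2 b3 b4 b5 ∈ Ft := by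
  unfold tK
  repeat' apply mul_mem
  all_goals exact Subfield.zpow_mem _ (vK_mem_Ft _ (by decide)) _


/-- `ϑ₁` is obtained from the initial monomial `x⁻¹y⁻¹` by crossing the two walls
with functions `1+t^{H-E₄-E₅}x` and `1+t^{E₁-E₅}y⁻¹`. -/
theorem theta_one_from_wall_crossing (σ₁ σ₂ : Kdp →+* Kdp)
    (hσ₁fix : ∀ z ∈ Ft, σ₁ z = z) (hσ₂fix : ∀ z ∈ Ft, σ₂ z = z)
    (hσ₁x : σ₁ xK = xK)
    (hσ₁y : σ₁ yK = yK * (1 + tK 1 0 0 0 (-1) (-1) * xK)⁻¹)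
    (hσ₂x : σ₂ xK = xK * (1 + tK 0 1 0 0 0 (-1) * yK⁻¹)⁻¹)
    (hσ₂y : σ₂ yK = yK) :
    σ₂ (σ₁ (xK⁻¹ * yK⁻¹)) = θK₁ := by
  have hv0 := vK_ne 0
  have hv1 := vK_ne 1
  have hv4 := vK_ne 4
  have hv5 := vK_ne 5
  have hx : xK ≠ 0 := vK_ne 6
  have hy : yK ≠ 0 := vK_ne 7
  have hA : tK 0 1 0 0 0 (-1) = vK 1 * (vK 5)⁻¹ := by
    simp [tK, zpow_neg]
  have hB : tK 1 0 0 0 (-1) (-1) = vK 0 * (vK 4)⁻¹ * (vK 5)⁻¹ := by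
    simp [tK, zpow_neg]
  have hN1 : vK 5 * yK + vK 1 ≠ 0 := by
    have hp : (MvPolynomial.X 5 * MvPolynomial.X 7 + MvPolynomial.X 1 :
        MvPolynomial (Fin 8) ℂ) ≠ 0 := by
      intro h
      have := congrArg (MvPolynomial.eval (fun _ => (1:ℂ))) h
      simp at this
    have h2 := fne _ hp
    rw [map_add, map_mul] at h2
    simpa [vK, yK] using h2
  have hC : (1 + tK 0 1 0 0 0 (-1) * yK⁻¹) ≠ 0 := by
    have heq : (1 + tK 0 1 0 0 0 (-1) * yK⁻¹) = (vK 5 * yK + vK 1) / (vK 5 * yK) := by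
      rw [hA]; field_simp
    rw [heq]
    exact div_ne_zero hN1 (mul_ne_zero hv5 hy)
  have hN2 : vK 4 * (vK 5 * yK + vK 1) + vK 0 * xK * yK ≠ 0 := by
    have hp : (MvPolynomial.X 4 * (MvPolynomial.X 5 * MvPolynomial.X 7 + MvPolynomial.X 1)
        + MvPolynomial.X 0 * MvPolynomial.X 6 * MvPolynomial.X 7 :
        MvPolynomial (Fin 8) ℂ) ≠ 0 := by
      intro h
      have := congrArg (MvPolynomial.eval (fun _ => (1:ℂ))) h
      simp at this
      norm_num at this
    have h2 := fne _ hp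
    rw [map_add, map_mul, map_add, map_mul, map_mul, map_mul] at h2
    simpa [vK, xK, yK] using h2
  have hD : (1 + tK 1 0 0 0 (-1) (-1) *
      (xK * (1 + tK 0 1 0 0 0 (-1) * yK⁻¹)⁻¹)) ≠ 0 := by
    have heq : (1 + tK 1 0 0 0 (-1) (-1) * (xK * (1 + tK 0 1 0 0 0 (-1) * yK⁻¹)⁻¹))
        = (vK 4 * (vK 5 * yK + vK 1) + vK 0 * xK * yK) / (vK 4 * (vK 5 * yK + vK 1)) := by
      rw [hA, hB]
      field_simp
    rw [heq]
    exact div_ne_zero hN2 (mul_ne_zero hv4 hN1)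
  rw [map_mul, map_inv₀, map_inv₀, hσ₁x, hσ₁y]
  rw [map_mul, map_inv₀, map_inv₀, map_mul, map_inv₀, map_add, map_one, map_mul,
    hσ₂x, hσ₂y, hσ₂fix _ (tK_mem_Ft 1 0 0 0 (-1) (-1))]
  unfold θK₁
  rw [show ((-2:ℤ)) = -(2:ℤ) from rfl, zpow_neg, zpow_two]
  rw [hA] at hC hD ⊢
  rw [hB] at hD ⊢
  have hCeq : (1 + vK 1 * (vK 5)⁻¹ * yK⁻¹) = (vK 5 * yK + vK 1) / (vK 5 * yK) := by
    field_simp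
  have hDeq : (1 + vK 0 * (vK 4)⁻¹ * (vK 5)⁻¹ * (xK * (1 + vK 1 * (vK 5)⁻¹ * yK⁻¹)⁻¹))
      = (vK 4 * (vK 5 * yK + vK 1) + vK 0 * xK * yK) / (vK 4 * (vK 5 * yK + vK 1)) := by
    rw [hCeq]
    field_simp
  rw [mul_inv, mul_inv, inv_inv, inv_inv, hDeq, hCeq]
  field_simp

end
end
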